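/- arXiv:2208.12947 — 2 statements merged into one kernel-verified Lean document; each statement's English description precedes it below -/
import Mathlib

section
/- Let q > 0. If m = (m_0,...,m_k) is a loop for q, then (-m_k,...,-m_0) is also a loop for q, and it is the inverse of m in the group of proper loops under composition with zero-skipping. -/
noncomputable def cfRev (q : ℝ) : List ℤ → ℝ
  | [] => 0
  | [a] => (a : ℝ)
  | a :: b :: rest => (a : ℝ) + 1 / (q * cfRev q (b :: rest))

/-- `cf q [m₀, …, m_k]` is the continued fraction `m_k + 1/(q m_{k-1} + q/( … + q/(q m₀)))`. -/
noncomputable def cf (q : ℝ) (l : List ℤ) : ℝ := cfRev q l.reverse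

/-- `l` is a path for `q`: all denominators nonzero, i.e. every proper nonempty prefix
has nonzero continued-fraction value. -/
def IsPath (q : ℝ) (l : List ℤ) : Prop :=
  l ≠ [] ∧ ∀ t : List ℤ, t ≠ [] → t <+: l → t.length < l.length → cf q t ≠ 0

/-- all entries except possibly the last are nonzero -/
def IsProper (l : List ℤ) : Prop := ∀ i, i + 1 < l.length → l.getD i 0 ≠ 0

def IsLoop (q : ℝ) (l : List ℤ) : Prop := IsPath q l ∧ cf q l = 0

/-- the weight `q^{k/2} ∏_{j<k} |c(q, m_j)|`. -/
noncomputable def weight (q : ℝ) (l : List ℤ) : ℝ :=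
  Real.sqrt (q ^ (l.length - 1)) * ∏ j ∈ Finset.range (l.length - 1), |cf q (l.take (j + 1))|

/-- composition of paths -/
def comp (m n : List ℤ) : List ℤ := m.dropLast ++ (m.getLastD 0 + n.headD 0) :: n.tail

/-- one step of zero-skipping -/
def SkipStep (l l' : List ℤ) : Prop :=
  ∃ (u v : List ℤ) (x y : ℤ), l = u ++ x :: 0 :: y :: v ∧ l' = u ++ (x + y) :: v

/-- the weight `w_q` is unique -/
def WeightUnique (q : ℝ) : Prop :=
  ∀ m n : List ℤ, IsPath q m → IsProper m → IsPath q n → IsProper n →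
    cf q m = cf q n → weight q m = weight q n

/-
Writing `c_j` for the value of the prefix `(m_0, …, m_j)`, the recursion
`c_{j+1} = m_{j+1} + 1/(q c_j)` can be run backwards: if `c_k = 0`, the prefixes of
`(-m_k, …, -m_0)` take the values `1/(q c_{k-1}), …, 1/(q c_0), 0`, all nonzero but the last.
Composing `m` with this loop produces `(m_0, …, m_{k-1}, 0, -m_{k-1}, …, -m_0)`, which
collapses to `(0)` by skipping the zeros from the middle outwards.
-/

/-- Also valid for `s = []`, where `cf q [] = 0` and `1 / 0 = 0`. -/
lemma cf_append_singleton (q : ℝ) (s : List ℤ) (a : ℤ) :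
    cf q (s ++ [a]) = a + 1 / (q * cf q s) := by
  rcases h : s.reverse with _ | ⟨b, t⟩
  · simp [List.reverse_eq_nil_iff.mp h, cf, cfRev]
  · simp only [cf, List.reverse_append, List.reverse_cons, List.reverse_nil, List.nil_append,
      List.singleton_append, h, cfRev]

def negRev (l : List ℤ) : List ℤ := (l.map fun x => -x).reverse

@[simp] lemma negRev_nil : negRev [] = [] := rfl

lemma negRev_cons (x : ℤ) (l : List ℤ) : negRev (x :: l) = negRev l ++ [-x] := by
  simp [negRev]

lemma negRev_append (l l' : List ℤ) : negRev (l ++ l') = negRev l' ++ negRev l := by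
  simp [negRev]

@[simp] lemma negRev_negRev (l : List ℤ) : negRev (negRev l) = l := by
  simp [negRev, List.map_reverse]

@[simp] lemma length_negRev (l : List ℤ) : (negRev l).length = l.length := by
  simp [negRev]

lemma exists_append_eq_of_prefix_negRev {u t : List ℤ} (h : u <+: negRev t) :
    ∃ t₀, t = t₀ ++ negRev u := by
  obtain ⟨w, hw⟩ := h
  exact ⟨negRev w, by rw [← negRev_append, hw, negRev_negRev]⟩

lemma cf_negRev_of_cf_append_eq_zero {q : ℝ} (hq : q ≠ 0) (s t : List ℤ)
    (hzero : cf q (s ++ t) = 0)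
    (hne : ∀ u, u ≠ [] → u <+: t → u.length < t.length → cf q (s ++ u) ≠ 0) :
    cf q (negRev t) = 1 / (q * cf q s) := by
  induction t generalizing s with
  | nil => simp_all [cf, cfRev]
  | cons x t ih =>
    have hsx : cf q (s ++ [x]) = x + 1 / (q * cf q s) := cf_append_singleton q s x
    rcases eq_or_ne t [] with rfl | ht
    · rw [hsx] at hzero
      rw [negRev_cons, negRev_nil, List.nil_append, cf, List.reverse_singleton, cfRev]
      push_cast
      linear_combination -hzero
    · have hsx0 : cf q (s ++ [x]) ≠ 0 :=
        hne [x] (List.cons_ne_nil x []) (List.prefix_cons_inj x |>.mpr (List.nil_prefix))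
          (by simpa using List.length_pos_iff.mpr ht)
      have htail : cf q (negRev t) = 1 / (q * cf q (s ++ [x])) := by
        refine ih (s ++ [x]) (by simpa using hzero) fun u hu hut hlen => ?_
        simpa using hne (x :: u) (List.cons_ne_nil x u) (List.prefix_cons_inj x |>.mpr hut)
          (by simpa using hlen)
      rw [negRev_cons, cf_append_singleton, htail, hsx]
      field_simp
      push_cast
      ring

lemma isLoop_negRev {q : ℝ} (hq : q ≠ 0) {m : List ℤ} (hm : IsLoop q m) :
    IsLoop q (negRev m) := by
  obtain ⟨⟨hne, hprefix⟩, hzero⟩ := hm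
  have key : ∀ t₀ t₁, m = t₀ ++ t₁ → cf q (negRev t₁) = 1 / (q * cf q t₀) := by
    rintro t₀ t₁ rfl
    refine cf_negRev_of_cf_append_eq_zero hq t₀ t₁ hzero fun u hu hut hlen => ?_
    exact hprefix (t₀ ++ u) (by simp [hu]) ((List.prefix_append_right_inj t₀).mpr hut)
      (by simpa using hlen)
  refine ⟨⟨by simpa [negRev] using hne, fun u hu hpu hlen => ?_⟩, ?_⟩
  · obtain ⟨t₀, hm⟩ := exists_append_eq_of_prefix_negRev hpu
    have hlen' : u.length < m.length := by simpa using hlen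
    have ht₀ : t₀ ≠ [] := by
      rintro rfl
      simp [hm] at hlen'
    rw [← negRev_negRev u, key t₀ (negRev u) hm]
    refine one_div_ne_zero (mul_ne_zero hq (hprefix t₀ ht₀ ⟨_, hm.symm⟩ ?_))
    rw [hm, List.length_append, length_negRev]
    exact Nat.lt_add_of_pos_right (List.length_pos_iff.mpr hu)
  · -- `cf q [] = 0`, so the value found is `1 / 0 = 0`.
    simpa [cf, cfRev] using key [] m rfl

lemma comp_negRev {m : List ℤ} (hm : m ≠ []) :
    comp m (negRev m) = m.dropLast ++ 0 :: negRev m.dropLast := by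
  obtain ⟨s, x, rfl⟩ := (List.eq_nil_or_concat m).resolve_left hm
  simp [comp, negRev_append, negRev_cons]

lemma reflTransGen_skipStep_append_zero_negRev (t : List ℤ) :
    Relation.ReflTransGen SkipStep (t ++ 0 :: negRev t) [0] := by
  induction t using List.reverseRecOn with
  | nil => exact .refl
  | append_singleton s x ih =>
    refine .head ⟨s, negRev s, x, -x, ?_, ?_⟩ ih
    · simp [negRev_append, negRev_cons]
    · simp

theorem stmt4 (q : ℝ) (hq : 0 < q) (m : List ℤ) (hm : IsLoop q m) :
    IsLoop q ((m.map (fun x => -x)).reverse) ∧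
    Relation.ReflTransGen SkipStep (comp m ((m.map (fun x => -x)).reverse)) [0] := by
  refine ⟨isLoop_negRev hq.ne' hm, ?_⟩
  change Relation.ReflTransGen SkipStep (comp m (negRev m)) [0]
  rw [comp_negRev hm.1.1]
  exact reflTransGen_skipStep_append_zero_negRev _
end

section
/- Let q > 0. The following are equivalent: (i) whenever two proper paths m, n for q satisfy c(q,m) = c(q,n), then w_q(m) = w_q(n) (the weight w_q is unique); (ii) w_q(m) = 1 for every proper loop m for q; (iii) w_q(m) = w_q(n) for every pair of non-trivial proper loops m, n for q. -/
/-!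
Zero-skipping `(…, x, 0, y, …) ↦ (…, x + y, …)` preserves the value and the weight of a path,
so every loop can be traded for a proper loop of the same weight. If `m = (m', a)` and
`n = (n', b)` have the same value, then `(m', a - b, -n'ₖ, …, -n'₀)` is a loop of weight
`w(m) / w(n)`: running `n'` backwards with negated entries inverts each factor `√q |c|` of its
weight. This gives (ii) ⇒ (i); comparing with the trivial loop gives (i) ⇒ (ii); and for
(iii) ⇒ (ii) the backwards loop of a proper loop `m` has weight `1 / w(m)`, which by (iii)
is also `w(m)`.
-/

section ContinuedFraction

variable {q : ℝ}

lemma cf_singleton (q : ℝ) (a : ℤ) : cf q [a] = a := rfl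

lemma cf_concat (q : ℝ) {l : List ℤ} (hl : l ≠ []) (a : ℤ) :
    cf q (l ++ [a]) = a + 1 / (q * cf q l) := by
  obtain ⟨b, t, hbt⟩ := List.exists_cons_of_ne_nil (List.reverse_ne_nil_iff.mpr hl)
  simp [cf, hbt, cfRev]

lemma cf_concat_eq_add (q : ℝ) (l : List ℤ) (a : ℤ) :
    cf q (l ++ [a]) = cf q (l ++ [0]) + a := by
  rcases eq_or_ne l [] with rfl | hl
  · simp [cf_singleton]
  · rw [cf_concat q hl, cf_concat q hl]
    push_cast
    ring

lemma weight_singleton (q : ℝ) (a : ℤ) : weight q [a] = 1 := by simp [weight]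

lemma weight_nonneg (q : ℝ) (l : List ℤ) : 0 ≤ weight q l := by
  unfold weight
  positivity

lemma weight_concat (hq : 0 ≤ q) {l : List ℤ} (hl : l ≠ []) (a : ℤ) :
    weight q (l ++ [a]) = √q * |cf q l| * weight q l := by
  obtain ⟨k, hk⟩ : ∃ k, l.length = k + 1 := Nat.exists_eq_succ_of_ne_zero (by simpa)
  have htake : ∀ j ∈ Finset.range (k + 1),
      |cf q ((l ++ [a]).take (j + 1))| = |cf q (l.take (j + 1))| := fun j hj => by
    rw [List.take_append_of_le_length (by simp at hj; omega)]
  simp only [weight, List.length_append, List.length_singleton, hk, Nat.add_sub_cancel]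
  rw [Finset.prod_congr rfl htake, Finset.prod_range_succ, List.take_of_length_le hk.le,
    pow_succ, Real.sqrt_mul (pow_nonneg hq _)]
  ring

lemma weight_concat_congr (q : ℝ) (l : List ℤ) (a b : ℤ) :
    weight q (l ++ [a]) = weight q (l ++ [b]) := by
  simp only [weight, List.length_append, List.length_singleton, Nat.add_sub_cancel]
  congr 1
  refine Finset.prod_congr rfl fun j hj => ?_
  simp only [Finset.mem_range] at hj
  rw [List.take_append_of_le_length (by omega), List.take_append_of_le_length (by omega)]

lemma isPath_concat_iff (q : ℝ) (l : List ℤ) (a : ℤ) :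
    IsPath q (l ++ [a]) ↔ l = [] ∨ IsPath q l ∧ cf q l ≠ 0 := by
  constructor
  · rintro ⟨-, h⟩
    rcases eq_or_ne l [] with rfl | hl
    · exact Or.inl rfl
    refine Or.inr ⟨⟨hl, fun t ht htl hlt => h t ht (htl.trans (List.prefix_append l [a]))
        (by simp only [List.length_append, List.length_singleton]; omega)⟩,
      h l hl (List.prefix_append l [a]) (by simp)⟩
  · intro h
    refine ⟨by simp, fun t ht hta hlt => ?_⟩
    simp only [List.length_append, List.length_singleton] at hlt
    have htl : t <+: l := List.prefix_iff_eq_take.mpr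
      ((List.prefix_iff_eq_take.mp hta).trans (List.take_append_of_le_length (by omega)))
    rcases h with rfl | ⟨⟨-, hl⟩, hcf⟩
    · exact absurd (List.eq_nil_of_prefix_nil htl) ht
    rcases (htl.length_le).eq_or_lt with heq | hlt'
    · rwa [htl.eq_of_length heq]
    · exact hl t ht htl hlt'

lemma isPath_singleton (q : ℝ) (a : ℤ) : IsPath q [a] := by
  simpa using (isPath_concat_iff q [] a).mpr (Or.inl rfl)

lemma IsPath.of_concat {l : List ℤ} {a : ℤ} (h : IsPath q (l ++ [a])) (hl : l ≠ []) :
    IsPath q l ∧ cf q l ≠ 0 :=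
  ((isPath_concat_iff q l a).mp h).resolve_left hl

lemma IsPath.concat {l : List ℤ} (hl : IsPath q l) (hcf : cf q l ≠ 0) (a : ℤ) :
    IsPath q (l ++ [a]) :=
  (isPath_concat_iff q l a).mpr (Or.inr ⟨hl, hcf⟩)

lemma IsPath.of_append {w v : List ℤ} (h : IsPath q (w ++ v)) (hw : w ≠ []) : IsPath q w :=
  ⟨hw, fun t ht htw hlt => h.2 t ht (htw.trans (List.prefix_append w v))
    (by simp only [List.length_append]; omega)⟩

lemma isPath_concat_congr (q : ℝ) (l : List ℤ) (a b : ℤ) :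
    IsPath q (l ++ [a]) ↔ IsPath q (l ++ [b]) := by
  rw [isPath_concat_iff, isPath_concat_iff]

lemma IsPath.exists_eq_concat {l : List ℤ} (hl : IsPath q l) : ∃ l' a, l = l' ++ [a] :=
  ⟨_, _, (List.dropLast_append_getLast hl.1).symm⟩

end ContinuedFraction

section AppendCongr

variable {q : ℝ} {w₁ w₂ : List ℤ}

lemma cf_append_congr (hw₁ : w₁ ≠ []) (hw₂ : w₂ ≠ []) (h : cf q w₁ = cf q w₂) (v : List ℤ) :
    cf q (w₁ ++ v) = cf q (w₂ ++ v) := by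
  induction v using List.reverseRecOn with
  | nil => simpa
  | append_singleton v a ih =>
    rw [← List.append_assoc, ← List.append_assoc, cf_concat q (by simp [hw₁]),
      cf_concat q (by simp [hw₂]), ih]

lemma IsPath.append_congr (hw₁ : w₁ ≠ []) (hw₂ : IsPath q w₂) (h : cf q w₁ = cf q w₂)
    {v : List ℤ} (hv : IsPath q (w₁ ++ v)) : IsPath q (w₂ ++ v) := by
  induction v using List.reverseRecOn with
  | nil => simpa
  | append_singleton v a ih =>
    rw [← List.append_assoc] at hv ⊢
    obtain ⟨hpath, hcf⟩ := hv.of_concat (by simp [hw₁])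
    exact (ih hpath).concat (by rwa [← cf_append_congr hw₁ hw₂.1 h]) a

lemma weight_append_congr (hq : 0 ≤ q) (hw₁ : w₁ ≠ []) (hw₂ : w₂ ≠ []) (h : cf q w₁ = cf q w₂)
    (hw : weight q w₁ = weight q w₂) (v : List ℤ) :
    weight q (w₁ ++ v) = weight q (w₂ ++ v) := by
  induction v using List.reverseRecOn with
  | nil => simpa
  | append_singleton v a ih =>
    rw [← List.append_assoc, ← List.append_assoc, weight_concat hq (by simp [hw₁]),
      weight_concat hq (by simp [hw₂]), ih, cf_append_congr hw₁ hw₂ h]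

end AppendCongr

section ZeroSkipping

variable {q : ℝ}

lemma cf_skip (hq : q ≠ 0) (u : List ℤ) (x y : ℤ) :
    cf q (u ++ [x, 0, y]) = cf q (u ++ [x + y]) := by
  have hsplit : u ++ [x, 0, y] = u ++ [x] ++ [0] ++ [y] := by simp
  have hxy : cf q (u ++ [x + y]) = cf q (u ++ [x]) + y := by
    rw [cf_concat_eq_add q u (x + y), cf_concat_eq_add q u x]
    push_cast
    ring
  rw [hsplit, cf_concat q (by simp), cf_concat q (by simp), hxy]
  rcases eq_or_ne (cf q (u ++ [x])) 0 with hc | hc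
  · simp [hc]
  · field_simp
    ring

lemma weight_skip (hq : 0 < q) {u : List ℤ} {x y : ℤ} (h : IsPath q (u ++ [x, 0, y])) :
    weight q (u ++ [x, 0, y]) = weight q (u ++ [x + y]) := by
  have hsplit : u ++ [x, 0, y] = u ++ [x] ++ [0] ++ [y] := by simp
  rw [hsplit] at h ⊢
  set c := cf q (u ++ [x])
  have hc : |c| ≠ 0 := abs_ne_zero.mpr ((h.of_concat (by simp)).1.of_concat (by simp)).2
  have hc0 : |cf q (u ++ [x] ++ [0])| = 1 / (q * |c|) := by
    rw [cf_concat q (by simp), Int.cast_zero, zero_add, abs_div, abs_one, abs_mul, abs_of_pos hq]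
  rw [weight_concat hq.le (by simp), weight_concat hq.le (by simp), hc0,
    weight_concat_congr q u x (x + y)]
  calc √q * (1 / (q * |c|)) * (√q * |c| * weight q (u ++ [x + y]))
      = (√q * √q) * |c| / (q * |c|) * weight q (u ++ [x + y]) := by ring
    _ = weight q (u ++ [x + y]) := by
      rw [Real.mul_self_sqrt hq.le, div_self (mul_ne_zero hq.ne' hc), one_mul]

lemma isPath_skip {u : List ℤ} {x y : ℤ} (h : IsPath q (u ++ [x, 0, y])) :
    IsPath q (u ++ [x + y]) := by
  have hsplit : u ++ [x, 0, y] = u ++ [x] ++ [0] ++ [y] := by simp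
  rw [hsplit] at h
  exact (isPath_concat_congr q u x (x + y)).mp ((h.of_concat (by simp)).1.of_concat (by simp)).1

namespace SkipStep

variable {l l' : List ℤ}

lemma length_add_two (h : SkipStep l l') : l'.length + 2 = l.length := by
  obtain ⟨u, v, x, y, rfl, rfl⟩ := h
  simp only [List.length_append, List.length_cons]
  omega

lemma cf_eq (hq : q ≠ 0) (h : SkipStep l l') : cf q l' = cf q l := by
  obtain ⟨u, v, x, y, rfl, rfl⟩ := h
  simpa using (cf_append_congr (by simp) (by simp) (cf_skip hq u x y) v).symm

lemma isPath (hq : q ≠ 0) (h : SkipStep l l') (hl : IsPath q l) : IsPath q l' := by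
  obtain ⟨u, v, x, y, rfl, rfl⟩ := h
  have hl' : IsPath q (u ++ [x, 0, y] ++ v) := by simpa using hl
  simpa using IsPath.append_congr (by simp) (isPath_skip (hl'.of_append (by simp)))
    (cf_skip hq u x y) hl'

lemma weight_eq (hq : 0 < q) (h : SkipStep l l') (hl : IsPath q l) :
    weight q l' = weight q l := by
  obtain ⟨u, v, x, y, rfl, rfl⟩ := h
  have hl' : IsPath q (u ++ [x, 0, y] ++ v) := by simpa using hl
  simpa using (weight_append_congr hq.le (by simp) (by simp) (cf_skip hq.ne' u x y)
    (weight_skip hq (hl'.of_append (by simp))) v).symm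

end SkipStep

lemma IsPath.exists_skipStep {l : List ℤ} (h : IsPath q l) (hl : ¬ IsProper l) :
    ∃ l', SkipStep l l' := by
  simp only [IsProper, not_forall, not_not] at hl
  obtain ⟨i, hi, h0⟩ := hl
  rw [List.getD_eq_getElem _ _ (by omega)] at h0
  have hdecomp : l = l.take i ++ 0 :: l[i + 1] :: l.drop (i + 2) := by
    conv_lhs => rw [← List.take_append_drop i l, List.drop_eq_getElem_cons (by omega),
      List.drop_eq_getElem_cons hi, h0]
  rcases List.eq_nil_or_concat' (l.take i) with hnil | ⟨u, x, hux⟩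
  · -- a leading zero is a prefix of value `0`
    rw [hnil, List.nil_append] at hdecomp
    exact (h.2 [0] (by simp) ⟨_, hdecomp.symm⟩ (by simp; omega) (by simp [cf_singleton])).elim
  · exact ⟨u ++ (x + l[i + 1]) :: l.drop (i + 2), u, _, x, _, by simpa [hux] using hdecomp, rfl⟩

lemma IsPath.exists_isProper (hq : 0 < q) {l : List ℤ} (hl : IsPath q l) :
    ∃ l', IsProper l' ∧ IsPath q l' ∧ cf q l' = cf q l ∧ weight q l' = weight q l := by
  induction hlen : l.length using Nat.strong_induction_on generalizing l with
  | _ k ih =>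
    by_cases hp : IsProper l
    · exact ⟨l, hp, hl, rfl, rfl⟩
    obtain ⟨l', hs⟩ := hl.exists_skipStep hp
    obtain ⟨l'', hp'', hl'', hcf, hw⟩ :=
      ih l'.length (by have := hs.length_add_two; omega) (hs.isPath hq.ne' hl) rfl
    exact ⟨l'', hp'', hl'', hcf.trans (hs.cf_eq hq.ne'), hw.trans (hs.weight_eq hq hl)⟩

end ZeroSkipping

section Loops

variable {q : ℝ}

lemma isLoop_append_map_neg_reverse (hq : 0 < q) {n P : List ℤ} (hn : IsPath q (n ++ [0]))
    (hP : IsPath q P) (hcf : cf q P = cf q (n ++ [0])) :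
    IsLoop q (P ++ (n.map Neg.neg).reverse) ∧
      weight q (P ++ (n.map Neg.neg).reverse) * weight q (n ++ [0]) = weight q P := by
  induction n using List.reverseRecOn generalizing P with
  | nil => simpa [weight_singleton, IsLoop, hP, cf_singleton] using hcf
  | append_singleton n c ih =>
    obtain ⟨hnc, hc⟩ := hn.of_concat (by simp)
    have hcfP : cf q P = 1 / (q * cf q (n ++ [c])) := by
      rw [hcf, cf_concat q (by simp), Int.cast_zero, zero_add]
    have hP0 : cf q P ≠ 0 := by
      rw [hcfP]
      exact one_div_ne_zero (mul_ne_zero hq.ne' hc)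
    have hcfPc : cf q (P ++ [-c]) = cf q (n ++ [0]) := by
      rw [cf_concat q hP.1, hcfP, cf_concat_eq_add q n c]
      field_simp
      push_cast
      ring
    have hsplit :
        P ++ ((n ++ [c]).map Neg.neg).reverse = P ++ [-c] ++ (n.map Neg.neg).reverse := by
      simp
    obtain ⟨hloop, hw⟩ := ih ((isPath_concat_congr q n c 0).mp hnc) (hP.concat hP0 (-c)) hcfPc
    refine ⟨hsplit ▸ hloop, ?_⟩
    have hprod : √q * |cf q P| * (√q * |cf q (n ++ [c])|) = 1 := by
      rw [hcfP, abs_div, abs_one, abs_mul, abs_of_pos hq]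
      field_simp
      rw [Real.sq_sqrt hq.le]
    rw [hsplit, weight_concat hq.le (by simp), weight_concat_congr q n c 0]
    rw [weight_concat hq.le hP.1] at hw
    calc weight q (P ++ [-c] ++ (n.map Neg.neg).reverse) *
          (√q * |cf q (n ++ [c])| * weight q (n ++ [0]))
        = (√q * |cf q (n ++ [c])|) * (√q * |cf q P| * weight q P) := by rw [← hw]; ring
      _ = weight q P := by linear_combination weight q P * hprod

lemma exists_isProper_isLoop_weight_mul_eq (hq : 0 < q) {m n : List ℤ} (hm : IsPath q m)
    (hn : IsPath q n) (hcf : cf q m = cf q n) :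
    ∃ L, IsProper L ∧ IsLoop q L ∧ weight q L * weight q n = weight q m := by
  obtain ⟨m, a, rfl⟩ := hm.exists_eq_concat
  obtain ⟨n, b, rfl⟩ := hn.exists_eq_concat
  have hcf' : cf q (m ++ [a - b]) = cf q (n ++ [0]) := by
    rw [cf_concat_eq_add q m a, cf_concat_eq_add q n b] at hcf
    rw [cf_concat_eq_add q m]
    push_cast
    linarith
  obtain ⟨hloop, hw⟩ := isLoop_append_map_neg_reverse hq ((isPath_concat_congr q n b 0).mp hn)
    ((isPath_concat_congr q m a (a - b)).mp hm) hcf'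
  obtain ⟨L, hLp, hLpath, hLcf, hLw⟩ := hloop.1.exists_isProper hq
  refine ⟨L, hLp, ⟨hLpath, hLcf.trans hloop.2⟩, ?_⟩
  rw [hLw, weight_concat_congr q n b 0, hw, weight_concat_congr q m a (a - b)]

end Loops

theorem stmt6 (q : ℝ) (hq : 0 < q) :
    (WeightUnique q ↔ ∀ m : List ℤ, IsProper m → IsLoop q m → weight q m = 1) ∧
    ((∀ m : List ℤ, IsProper m → IsLoop q m → weight q m = 1) ↔
      ∀ m n : List ℤ, IsProper m → IsLoop q m → m ≠ [0] →
        IsProper n → IsLoop q n → n ≠ [0] → weight q m = weight q n) := by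
  have hzero_proper : IsProper [0] := fun i hi => by simp at hi
  have hzero_cf : cf q [0] = 0 := by simp [cf_singleton]
  refine ⟨⟨fun hunique m hm hloop => ?_, fun hone m n hm _ hn _ hcf => ?_⟩,
    ⟨fun hone m n hm hmloop _ hn hnloop _ => by rw [hone m hm hmloop, hone n hn hnloop],
      fun heq m hm hloop => ?_⟩⟩
  · simpa [weight_singleton] using
      hunique m [0] hloop.1 hm (isPath_singleton q 0) hzero_proper (by rw [hloop.2, hzero_cf])
  · obtain ⟨L, hLp, hL, hw⟩ := exists_isProper_isLoop_weight_mul_eq hq hm hn hcf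
    rw [← hw, hone L hLp hL, one_mul]
  · rcases eq_or_ne m [0] with rfl | hm0
    · exact weight_singleton q 0
    obtain ⟨L, hLp, hL, hw⟩ := exists_isProper_isLoop_weight_mul_eq hq
      (isPath_singleton q 0) hloop.1 (by rw [hloop.2, hzero_cf])
    rw [weight_singleton] at hw
    rcases eq_or_ne L [0] with rfl | hL0
    · simpa [weight_singleton] using hw
    · rw [heq L m hLp hL hL0 hm hloop hm0] at hw
      exact (pow_eq_one_iff_of_nonneg (weight_nonneg q m) two_ne_zero).mp (by rw [sq, hw])
end
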